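/- For the term family e_n = Lam (App (App c_n ω) 0) where c_n is the n-th Church numeral and ω = Lam (App 0 0), the strong normal form of e_n has size at least 2^n (size measured as the number of term constructors), while e_n itself has size O(n). -/
import Mathlib


set_option autoImplicit true

/-- Lambda terms with de Bruijn indices. -/
inductive Tm : Type
  | var : Nat → Tm
  | app : Tm → Tm → Tm
  | lam : Tm → Tm
  deriving DecidableEq, Repr

/-- Shifting `T↑ᵏᵢ`: add `i` to all indices `≥ k`. -/
def shiftTm (i : Nat) : Nat → Tm → Tm
  | k, .var n => if n ≥ k then .var (n + i) else .var n
  | k, .app t1 t2 => .app (shiftTm i k t1) (shiftTm i k t2)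
  | k, .lam t => .lam (shiftTm i (k + 1) t)

/-- Substitution `T⟨i←T'⟩`. -/
def substTm (t' : Tm) : Nat → Tm → Tm
  | i, .var n => if n < i then .var n else if n = i then shiftTm i 0 t' else .var (n - 1)
  | i, .app t1 t2 => .app (substTm t' i t1) (substTm t' i t2)
  | i, .lam t => .lam (substTm t' (i + 1) t)

/-- `ClosedUnder k t`: all free de Bruijn indices of `t` are `< k`. -/
def ClosedUnder : Nat → Tm → Prop
  | k, .var n => n < k
  | k, .app t u => ClosedUnder k t ∧ ClosedUnder k u
  | k, .lam t => ClosedUnder (k + 1) t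

def sizeTm : Tm → Nat
  | .var _ => 1
  | .app t u => 1 + sizeTm t + sizeTm u
  | .lam t => 1 + sizeTm t

mutual
  /-- Strong normal forms: N ::= Lam N | a. -/
  inductive IsNf : Tm → Prop
    | lam : IsNf t → IsNf (Tm.lam t)
    | ne : IsNe t → IsNf t
  /-- Neutral terms: a ::= Var n | App a N. -/
  inductive IsNe : Tm → Prop
    | var : IsNe (Tm.var n)
    | app : IsNe t → IsNf u → IsNe (Tm.app t u)
end

mutual
  /-- Weak normal forms (fireball): w ::= Lam T | i. -/
  inductive IsWnf : Tm → Prop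
    | lam : IsWnf (Tm.lam t)
    | inert : IsInert t → IsWnf t
  /-- Inert terms: i ::= Var n | App i w. -/
  inductive IsInert : Tm → Prop
    | var : IsInert (Tm.var n)
    | app : IsInert t → IsWnf u → IsInert (Tm.app t u)
end

/-- One-hole contexts (outside-in representation as a tree). -/
inductive Ctx : Type
  | hole : Ctx
  | appL : Ctx → Tm → Ctx   -- App C t : hole in the function position
  | appR : Tm → Ctx → Ctx   -- App t C : hole in the argument position
  | lamC : Ctx → Ctx
  deriving DecidableEq

def plugC : Ctx → Tm → Tm
  | .hole, t => t
  | .appL c u, t => .app (plugC c t) u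
  | .appR u c, t => .app u (plugC c t)
  | .lamC c, t => .lam (plugC c t)

/-- Weak right-to-left CbV contexts: F ::= □ | App F w | App T F. -/
inductive IsFc : Ctx → Prop
  | hole : IsFc .hole
  | appL : IsFc c → IsWnf w → IsFc (.appL c w)
  | appR : IsFc c → IsFc (.appR t c)

mutual
  /-- H ::= App H N | App i R. -/
  inductive IsHc : Ctx → Prop
    | appL : IsHc c → IsNf n → IsHc (.appL c n)
    | appR : IsInert i → IsRc c → IsHc (.appR i c)
  /-- rrCbV contexts: R ::= Lam R | H | F. -/
  inductive IsRc : Ctx → Prop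
    | lam : IsRc c → IsRc (.lamC c)
    | h : IsHc c → IsRc c
    | f : IsFc c → IsRc c
end

/-- βwnf-reduction in a weak right-to-left CbV context. -/
def RedF (t t' : Tm) : Prop :=
  ∃ c b w, IsFc c ∧ IsWnf w ∧
    t = plugC c (.app (.lam b) w) ∧ t' = plugC c (substTm w 0 b)

/-- One-step rrCbV reduction: βwnf-contraction in an rrCbV context. -/
def RedR (t t' : Tm) : Prop :=
  ∃ c b w, IsRc c ∧ IsWnf w ∧
    t = plugC c (.app (.lam b) w) ∧ t' = plugC c (substTm w 0 b)

/-- Full β-reduction (one step, anywhere). -/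
inductive Beta : Tm → Tm → Prop
  | beta : Beta (.app (.lam t) u) (substTm u 0 t)
  | appL : Beta t t' → Beta (.app t u) (.app t' u)
  | appR : Beta u u' → Beta (.app t u) (.app t u')
  | lam : Beta t t' → Beta (.lam t) (.lam t')

mutual
  /-- Machine weak normal forms: W ::= ⟨Lam T, E⟩ | I. -/
  inductive MW : Type
    | clos : Tm → MEnv → MW
    | inert : MI → MW
  /-- Machine inert terms: I ::= V(n) | App I W. -/
  inductive MI : Type
    | avar : Nat → MI
    | mapp : MI → MW → MI
  /-- Environments: lists of machine wnfs. -/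
  inductive MEnv : Type
    | nil : MEnv
    | cons : MW → MEnv → MEnv
end

def lookupEnv : MEnv → Nat → Option MW
  | .nil, _ => none
  | .cons w _, 0 => some w
  | .cons _ e, n + 1 => lookupEnv e n

/-- Stack frames of the KNV machine. -/
inductive Frame : Type
  | closF : Tm → MEnv → Frame  -- (T,E)□
  | argW : MW → Frame          -- □W
  | nfArg : Tm → Frame         -- N□ : App □ N with N a strong nf
  | lamF : Frame               -- λ□
  | inertF : MI → Frame        -- I□ : App I □

/-- Configurations of the KNV machine. -/
inductive Conf : Type
  | eval : Tm → MEnv → List Frame → Nat → Conf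
  | apply : MW → List Frame → Nat → Conf
  | norm : Tm → Nat → List Frame → Conf

/-- Side condition for rules 8–10: the top of the stack is not `(T,E)□` nor `□W`. -/
def notElim : List Frame → Prop
  | Frame.closF _ _ :: _ => False
  | Frame.argW _ :: _ => False
  | _ => True

/-- The 13 transition rules of the KNV machine (Figure 3). -/
inductive Step : Conf → Conf → Prop
  | r1 : Step (.eval (.app t1 t2) e s m) (.eval t2 e (.closF t1 e :: s) m)
  | r2 : Step (.eval (.lam t) e s m) (.apply (.clos t e) s m)
  | r3 : Step (.eval (.var 0) (.cons w e) s m) (.apply w s m)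
  | r4 : Step (.eval (.var (n + 1)) (.cons w e) s m) (.eval (.var n) e s m)
  | r5 : Step (.apply w (.closF t e :: s) m) (.eval t e (.argW w :: s) m)
  | r6 : Step (.apply (.clos t e) (.argW w :: s) m) (.eval t (.cons w e) s m)
  | r7 : Step (.apply (.inert i) (.argW w :: s) m) (.apply (.inert (.mapp i w)) s m)
  | r8 : notElim s →
      Step (.apply (.clos t e) s m)
        (.eval t (.cons (.inert (.avar (m + 1))) e) (.lamF :: s) (m + 1))
  | r9 : notElim s → Step (.apply (.inert (.mapp i w)) s m) (.apply w (.inertF i :: s) m)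
  | r10 : notElim s → Step (.apply (.inert (.avar n)) s m) (.norm (.var (m - n)) m s)
  | r11 : Step (.norm t m (.inertF i :: s)) (.apply (.inert i) (.nfArg t :: s) m)
  | r12 : Step (.norm t m (.lamF :: s)) (.norm (.lam t) (m - 1) s)
  | r13 : Step (.norm a m (.nfArg t :: s)) (.norm (.app a t) m s)

/-- KNV transitions without the β-contraction rule (6). -/
inductive StepNB : Conf → Conf → Prop
  | r1 : StepNB (.eval (.app t1 t2) e s m) (.eval t2 e (.closF t1 e :: s) m)
  | r2 : StepNB (.eval (.lam t) e s m) (.apply (.clos t e) s m)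
  | r3 : StepNB (.eval (.var 0) (.cons w e) s m) (.apply w s m)
  | r4 : StepNB (.eval (.var (n + 1)) (.cons w e) s m) (.eval (.var n) e s m)
  | r5 : StepNB (.apply w (.closF t e :: s) m) (.eval t e (.argW w :: s) m)
  | r7 : StepNB (.apply (.inert i) (.argW w :: s) m) (.apply (.inert (.mapp i w)) s m)
  | r8 : notElim s →
      StepNB (.apply (.clos t e) s m)
        (.eval t (.cons (.inert (.avar (m + 1))) e) (.lamF :: s) (m + 1))
  | r9 : notElim s → StepNB (.apply (.inert (.mapp i w)) s m) (.apply w (.inertF i :: s) m)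
  | r10 : notElim s → StepNB (.apply (.inert (.avar n)) s m) (.norm (.var (m - n)) m s)
  | r11 : StepNB (.norm t m (.inertF i :: s)) (.apply (.inert i) (.nfArg t :: s) m)
  | r12 : StepNB (.norm t m (.lamF :: s)) (.norm (.lam t) (m - 1) s)
  | r13 : StepNB (.norm a m (.nfArg t :: s)) (.norm (.app a t) m s)

mutual
  /-- Stack shape grammar: S1. -/
  inductive WS1 : List Frame → Prop
    | closF : WS1 s → WS1 (.closF t e :: s)
    | argW : WS1 s → WS1 (.argW w :: s)
    | s3 : WS3 s → WS1 s
  /-- Stack shape grammar: S2. -/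
  inductive WS2 : List Frame → Prop
    | nfArg : IsNf t → WS2 s → WS2 (.nfArg t :: s)
    | s3 : WS3 s → WS2 s
  /-- Stack shape grammar: S3. -/
  inductive WS3 : List Frame → Prop
    | nil : WS3 []
    | lamF : WS3 s → WS3 (.lamF :: s)
    | inertF : WS2 s → WS3 (.inertF i :: s)
end

/-- Well-formed configurations. -/
inductive WFConf : Conf → Prop
  | eval : WS1 s → WFConf (.eval t e s m)
  | applyW : WS1 s → WFConf (.apply w s m)
  | applyI : WS2 s → WFConf (.apply (.inert i) s m)
  | normNe : IsNe a → WS2 s → WFConf (.norm a m s)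
  | normNf : IsNf n → WS3 s → WFConf (.norm n m s)

mutual
  /-- Decoding of machine weak normal forms at a de Bruijn level. -/
  inductive DecW : MW → Nat → Tm → Prop
    | clos : DecT t e m 1 b → DecW (.clos t e) m (.lam b)
    | inert : DecI i m t → DecW (.inert i) m t
  /-- Decoding of machine inert terms at a de Bruijn level. -/
  inductive DecI : MI → Nat → Tm → Prop
    | avar : DecI (.avar n) m (.var (m - n))
    | mapp : DecI i m t1 → DecW w m t2 → DecI (.mapp i w) m (.app t1 t2)
  /-- Decoding of a term in an environment at level `m` and binder depth `d`
      (simultaneous substitution of decoded environment entries). -/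
  inductive DecT : Tm → MEnv → Nat → Nat → Tm → Prop
    | varLt : n < d → DecT (.var n) e m d (.var n)
    | varEnv : d ≤ n → lookupEnv e (n - d) = some w → DecW w m t →
        DecT (.var n) e m d (shiftTm d 0 t)
    | varFree : d ≤ n → lookupEnv e (n - d) = none → DecT (.var n) e m d (.var n)
    | app : DecT t1 e m d u1 → DecT t2 e m d u2 →
        DecT (.app t1 t2) e m d (.app u1 u2)
    | lam : DecT t e m (d + 1) b → DecT (.lam t) e m d (.lam b)
end

/-- Annotated terms and frames. -/
inductive Ann : Type
  | tm : Tm → Ann     -- T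
  | tmW : Tm → Ann    -- Tᵂ
  | tmN : Tm → Ann    -- Tᴺ
  | funL : Tm → Ann   -- T□ : App T □
  | argR : Tm → Ann   -- □T : App □ T
  | funLW : Tm → Ann  -- (I□)ᵂ : App I □
  | argRN : Tm → Ann  -- (N□)ᴺ : App □ N
  | lamF : Ann        -- λ□
  deriving DecidableEq

def rankAnn : Ann → Nat
  | .tm _ => 0
  | .funL _ => 1
  | .argR _ => 2
  | .tmW _ => 3
  | .funLW _ => 4
  | .argRN _ => 5
  | .lamF => 6
  | .tmN _ => 7

/-- The strict order on annotated terms/frames from the paper. -/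
def AnnLt (a b : Ann) : Prop := rankAnn a < rankAnn b

/-- Reversed lexicographic extension of `AnnLt` to lists. -/
def RLex (l1 l2 : List Ann) : Prop := List.Lex AnnLt l1.reverse l2.reverse

def plugA : Ann → Tm → Tm
  | .funL t, u => .app t u
  | .argR t, u => .app u t
  | .funLW t, u => .app t u
  | .argRN t, u => .app u t
  | .lamF, u => .lam u
  | .tm t, _ => t
  | .tmW t, _ => t
  | .tmN t, _ => t

/-- Plugging an annotated decomposition (head must be an annotated term). -/
def plugD : List Ann → Option Tm
  | [] => none
  | a :: l =>
    match a with
    | .tm t => some (l.foldl (fun u f => plugA f u) t)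
    | .tmW t => some (l.foldl (fun u f => plugA f u) t)
    | .tmN t => some (l.foldl (fun u f => plugA f u) t)
    | _ => none

/-- Decoding of stacks to lists of annotated frames; the `Nat` is the number
    of λ□ frames in the stack (the current de Bruijn level). -/
inductive DecS : List Frame → Nat → List Ann → Prop
  | nil : DecS [] 0 []
  | closF : DecT t e m 0 t' → DecS s m l → DecS (.closF t e :: s) m (.funL t' :: l)
  | argW : DecW w m t' → DecS s m l → DecS (.argW w :: s) m (.argR t' :: l)
  | nfArg : DecS s m l → DecS (.nfArg t :: s) m (.argRN t :: l)
  | lamF : DecS s m l → DecS (.lamF :: s) (m + 1) (.lamF :: l)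
  | inertF : DecI i m t' → DecS s m l → DecS (.inertF i :: s) m (.funLW t' :: l)

/-- Decoding of configurations to annotated decompositions. -/
inductive DecConf : Conf → List Ann → Prop
  | eval : DecT t e m 0 t' → DecS s m l → DecConf (.eval t e s m) (.tm t' :: l)
  | apply : DecW w m t' → DecS s m l → DecConf (.apply w s m) (.tmW t' :: l)
  | norm : DecS s m l → DecConf (.norm t m s) (.tmN t :: l)

/-- Frames over plain lambda terms (for the context grammars of Figure 5). -/
inductive Fr : Type
  | funL : Tm → Fr  -- flapp T : App T □
  | argR : Tm → Fr  -- frapp T : App □ T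
  | lamF : Fr       -- λ□
  deriving DecidableEq

mutual
  /-- Inside-out grammar: S1. -/
  inductive IoS1 : List Fr → Prop
    | funL : IoS1 s → IoS1 (.funL t :: s)
    | argR : IsWnf w → IoS1 s → IoS1 (.argR w :: s)
    | s3 : IoS3 s → IoS1 s
  /-- Inside-out grammar: S2. -/
  inductive IoS2 : List Fr → Prop
    | argR : IsNf n → IoS2 s → IoS2 (.argR n :: s)
    | s3 : IoS3 s → IoS2 s
  /-- Inside-out grammar: S3. -/
  inductive IoS3 : List Fr → Prop
    | nil : IoS3 []
    | lamF : IoS3 s → IoS3 (.lamF :: s)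
    | funL : IsInert i → IoS2 s → IoS3 (.funL i :: s)
end

mutual
  /-- Outside-in grammar: F. -/
  inductive OiF : List Fr → Prop
    | nil : OiF []
    | argR : IsWnf w → OiF s → OiF (.argR w :: s)
    | funL : OiF s → OiF (.funL t :: s)
  /-- Outside-in grammar: H. -/
  inductive OiH : List Fr → Prop
    | argR : IsNf n → OiH s → OiH (.argR n :: s)
    | funL : IsInert i → OiR s → OiH (.funL i :: s)
  /-- Outside-in grammar: R. -/
  inductive OiR : List Fr → Prop
    | lamF : OiR s → OiR (.lamF :: s)
    | h : OiH s → OiR s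
    | f : OiF s → OiR s
end

def ITm : Tm := .lam (.var 0)
def KTm : Tm := .lam (.lam (.var 1))
def omegaSmall : Tm := .lam (.app (.var 0) (.var 0))
def OmegaTm : Tm := .app omegaSmall omegaSmall

def churchBody : Nat → Tm
  | 0 => .var 0
  | n + 1 => .app (.var 1) (churchBody n)

/-- The n-th Church numeral. -/
def church (n : Nat) : Tm := .lam (.lam (churchBody n))

/-- eₙ = Lam (App (App cₙ ω) 0). -/
def eTm (n : Nat) : Tm := .lam (.app (.app (church n) omegaSmall) (.var 0))

section Aux

lemma omega_nostep : ∀ t', ¬ Beta omegaSmall t' := by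
  intro t' h
  cases h with
  | lam h =>
    cases h with
    | appL h => cases h
    | appR h => cases h

lemma churchBody_nostep (k : Nat) : ∀ t', ¬ Beta (churchBody k) t' := by
  induction k with
  | zero => intro t' h; cases h
  | succ k ih =>
    intro t' h
    cases h with
    | appL h => cases h
    | appR h => exact ih _ h

lemma shift_zero (t : Tm) : ∀ k, shiftTm 0 k t = t := by
  induction t with
  | var n => intro k; simp [shiftTm]
  | app a b iha ihb => intro k; simp [shiftTm, iha, ihb]
  | lam t ih => intro k; simp [shiftTm, ih]

/-- Over-approximation of the reducts of ωᵏ(x₀). -/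
inductive DD : Nat → Tm → Prop
  | base : DD 0 (.var 0)
  | om : DD k t → DD (k + 1) (.app omegaSmall t)
  | dup : DD k a → DD k b → DD (k + 1) (.app a b)

lemma DD_not_lam {k m} (h : DD k m) : ∀ u, m ≠ Tm.lam u := by
  cases h <;> simp

lemma subst_omega (v : Tm) (i : Nat) : substTm v i omegaSmall = omegaSmall := by
  simp [substTm, omegaSmall]

lemma DD_subst {k m} (h : DD k m) : substTm (.var 0) 0 m = m := by
  induction h with
  | base => simp [substTm, shiftTm]
  | om h ih => simp [substTm, ih, omegaSmall]
  | dup ha hb iha ihb => simp [substTm, iha, ihb]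

lemma DD_beta {k m m'} (h : DD k m) (hb : Beta m m') : DD k m' := by
  induction h generalizing m' with
  | base => cases hb
  | om h ih =>
    rw [show omegaSmall = Tm.lam (.app (.var 0) (.var 0)) from rfl] at hb
    cases hb with
    | beta =>
      simp only [substTm, shift_zero, if_neg (by omega : ¬ (0:Nat) < 0), if_pos rfl]
      exact DD.dup h h
    | appL hf => exact absurd hf (omega_nostep _)
    | appR ha => exact DD.om (ih ha)
  | dup ha hb' iha ihb =>
    cases hb with
    | beta => exact absurd rfl (DD_not_lam ha _)
    | appL hf => exact DD.dup (iha hf) hb'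
    | appR hg => exact DD.dup ha (ihb hg)

lemma DD_size {k m} (h : DD k m) (hn : ∀ t', ¬ Beta m t') : 2 ^ k ≤ sizeTm m := by
  induction h with
  | base => simp [sizeTm]
  | om h ih => exact absurd (Beta.beta) (hn _)
  | dup ha hb iha ihb =>
    have h1 := iha (fun t' ht => hn _ (Beta.appL ht))
    have h2 := ihb (fun t' ht => hn _ (Beta.appR ht))
    simp only [sizeTm, pow_succ]
    omega

def chainTm : Nat → Tm
  | 0 => .var 0
  | k + 1 => .app omegaSmall (chainTm k)

lemma DD_chain (k : Nat) : DD k (chainTm k) := by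
  induction k with
  | zero => exact DD.base
  | succ k ih => exact DD.om ih

lemma subst_church (k : Nat) : substTm omegaSmall 1 (churchBody k) = chainTm k := by
  induction k with
  | zero => simp [churchBody, chainTm, substTm]
  | succ k ih =>
    simp [churchBody, chainTm, substTm, ih]
    simp [shiftTm, omegaSmall]

/-- Invariant: over-approximation of the reducts of eₙ. -/
def InvE (n : Nat) (t : Tm) : Prop :=
  t = eTm n ∨
  (∃ m, DD n m ∧ t = .lam (.app (.lam m) (.var 0))) ∨
  (∃ m, DD n m ∧ t = .lam m)

lemma InvE_beta {n t t'} (h : InvE n t) (hb : Beta t t') : InvE n t' := by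
  rcases h with h | ⟨m, hm, h⟩ | ⟨m, hm, h⟩
  · subst h
    cases hb with
    | lam h1 =>
      cases h1 with
      | appR h2 => cases h2
      | appL h2 =>
        cases h2 with
        | beta =>
          refine Or.inr (Or.inl ⟨chainTm n, DD_chain n, ?_⟩)
          simp [substTm, subst_church]
        | appL h3 =>
          cases h3 with
          | lam h4 =>
            cases h4 with
            | lam h5 => exact absurd h5 (churchBody_nostep _ _)
        | appR h3 => exact absurd h3 (omega_nostep _)
  · subst h
    cases hb with
    | lam h1 =>
      cases h1 with
      | beta =>
        refine Or.inr (Or.inr ⟨m, hm, ?_⟩)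
        rw [DD_subst hm]
      | appR h2 => cases h2
      | appL h2 =>
        cases h2 with
        | lam h3 =>
          exact Or.inr (Or.inl ⟨_, DD_beta hm h3, rfl⟩)
  · subst h
    cases hb with
    | lam h1 => exact Or.inr (Or.inr ⟨_, DD_beta hm h1, rfl⟩)

lemma sizeTm_churchBody (k : Nat) : sizeTm (churchBody k) = 2 * k + 1 := by
  induction k with
  | zero => simp [churchBody, sizeTm]
  | succ k ih => simp [churchBody, sizeTm, ih]; omega

end Aux

/-- eₙ has size linear in n (exactly 2n+11) while any β-normal
    form of eₙ has size at least 2^n. -/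
theorem size_explosion (n : ℕ) :
    sizeTm (eTm n) = 2 * n + 11 ∧
    ∀ N : Tm, Relation.ReflTransGen Beta (eTm n) N → (∀ N', ¬ Beta N N') →
      2 ^ n ≤ sizeTm N := by
  constructor
  · simp [eTm, church, omegaSmall, sizeTm, sizeTm_churchBody]; omega
  · intro N hred hnf
    have hInvE : InvE n N := by
      clear hnf
      induction hred with
      | refl => exact Or.inl rfl
      | tail _ hb ih => exact InvE_beta ih hb
    rcases hInvE with h | ⟨m, hm, h⟩ | ⟨m, hm, h⟩
    · subst h
      exact absurd (Beta.lam (Beta.appL Beta.beta)) (hnf _)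
    · subst h
      exact absurd (Beta.lam Beta.beta) (hnf _)
    · subst h
      have : ∀ t', ¬ Beta m t' := fun t' ht => hnf _ (Beta.lam ht)
      have := DD_size hm this
      simp only [sizeTm]
      omega
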